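/- arXiv:1801.03967 — 4 statements merged into one kernel-verified Lean document; each statement's English description precedes it below -/
import Mathlib

section
/- Let r₁,…,r_m ∈ K(x₁,…,xₙ) be rational functions with r_i = p_i/q_i for polynomials p_i, q_i ∈ K[x], q_i ≠ 0. Then the ideal of all polynomials p ∈ K[y₁,…,y_m] with p(r₁,…,r_m) = 0 (the ideal of algebraic relations among r₁,…,r_m) equals ((Σ_{i=1}^m ⟨q_i·y_i − p_i⟩) : ⟨lcm(q₁,…,q_m)⟩^∞) ∩ K[y₁,…,y_m], i.e., the saturation of the ideal generated by the q_i·y_i − p_i with respect to lcm(q₁,…,q_m), intersected with K[y]. -/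
/-!
Let `d` be a common multiple of the `qᵢ` and `J = ⟨qᵢ yᵢ - pᵢ⟩`. Modulo `J`, each `d yᵢ` is
congruent to a polynomial in `x` alone, so for every `f ∈ K[y]` some `dᵏ f` is congruent to
some `g ∈ K[x]`. The substitution `x ↦ x, y ↦ r` kills `J` and is injective on `K[x]`, so
`f(r) = 0` forces `g = 0`, i.e. `dᵏ f ∈ J`. Conversely `dᵏ f ∈ J` gives `d(x)ᵏ f(r) = 0`,
and `d ≠ 0`.
-/

open MvPolynomial

theorem Subalgebra.exists_pow_mul_aeval_mem {R T ι : Type*} [CommSemiring R] [CommSemiring T]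
    [Algebra R T] (S : Subalgebra R T) {D : T} (hD : D ∈ S) (y : ι → T)
    (hy : ∀ i, D * y i ∈ S) (f : MvPolynomial ι R) : ∃ k : ℕ, D ^ k * aeval y f ∈ S := by
  induction f using MvPolynomial.induction_on with
  | C a => exact ⟨0, by simp [S.algebraMap_mem a]⟩
  | add f g hf hg =>
    obtain ⟨k, hk⟩ := hf
    obtain ⟨l, hl⟩ := hg
    refine ⟨k + l, ?_⟩
    have : D ^ (k + l) * aeval y (f + g) =
        D ^ l * (D ^ k * aeval y f) + D ^ k * (D ^ l * aeval y g) := by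
      rw [map_add]; ring
    rw [this]
    exact S.add_mem (S.mul_mem (S.pow_mem hD l) hk) (S.mul_mem (S.pow_mem hD k) hl)
  | mul_X f i hf =>
    obtain ⟨k, hk⟩ := hf
    refine ⟨k + 1, ?_⟩
    have : D ^ (k + 1) * aeval y (f * X i) = (D ^ k * aeval y f) * (D * y i) := by
      rw [map_mul, aeval_X]; ring
    rw [this]
    exact S.mul_mem hk (hy i)

namespace MvPolynomial

variable {K σ ι F : Type*} [CommRing K] [CommRing F] [Algebra (MvPolynomial σ K) F]

noncomputable def substHom (r : ι → F) : MvPolynomial (σ ⊕ ι) K →+* F :=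
  eval₂Hom ((algebraMap (MvPolynomial σ K) F).comp C)
    (Sum.elim (algebraMap (MvPolynomial σ K) F ∘ X) r)

theorem substHom_rename_inl (r : ι → F) (a : MvPolynomial σ K) :
    substHom r (rename Sum.inl a) = algebraMap (MvPolynomial σ K) F a := by
  rw [substHom, coe_eval₂Hom, eval₂_rename, Sum.elim_comp_inl, ← eval₂_comp_left, eval₂_eta]

theorem substHom_rename_inr (r : ι → F) (f : MvPolynomial ι K) :
    substHom (σ := σ) r (rename Sum.inr f) =
      eval₂ ((algebraMap (MvPolynomial σ K) F).comp C) r f := by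
  rw [substHom, coe_eval₂Hom, eval₂_rename, Sum.elim_comp_inr]

theorem substHom_X_inr (r : ι → F) (i : ι) :
    substHom (K := K) (σ := σ) r (X (Sum.inr i)) = r i := by
  simp [substHom]

/-- `⟨qᵢ yᵢ - pᵢ⟩ ◁ K[x, y]`, whose zero set is the graph of `x ↦ (pᵢ(x)/qᵢ(x))ᵢ`. -/
noncomputable def graphIdeal (p q : ι → MvPolynomial σ K) : Ideal (MvPolynomial (σ ⊕ ι) K) :=
  Ideal.span (Set.range fun i : ι =>
    rename Sum.inl (q i) * X (Sum.inr i) - rename Sum.inl (p i))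

theorem graphIdeal_le_ker_substHom {p q : ι → MvPolynomial σ K} {r : ι → F}
    (hr : ∀ i, algebraMap _ F (q i) * r i = algebraMap _ F (p i)) :
    graphIdeal p q ≤ RingHom.ker (substHom r) := by
  rw [graphIdeal, Ideal.span_le]
  rintro _ ⟨i, rfl⟩
  rw [SetLike.mem_coe, RingHom.mem_ker, map_sub, map_mul, substHom_rename_inl,
    substHom_rename_inl, substHom_X_inr, hr, sub_self]

theorem rename_inl_mul_X_inr_sub_mem_graphIdeal {p q : ι → MvPolynomial σ K}
    {d s : MvPolynomial σ K} {i : ι} (hd : d = q i * s) :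
    rename Sum.inl d * X (Sum.inr i) - rename Sum.inl (s * p i) ∈ graphIdeal p q := by
  have : rename Sum.inl d * X (Sum.inr i) - rename Sum.inl (s * p i) =
      rename Sum.inl s * (rename Sum.inl (q i) * X (Sum.inr i) - rename Sum.inl (p i)) := by
    rw [hd, map_mul, map_mul]; ring
  rw [this]
  exact Ideal.mul_mem_left _ _ (Ideal.subset_span ⟨i, rfl⟩)

theorem exists_pow_mul_rename_inr_sub_rename_inl_mem {p q : ι → MvPolynomial σ K}
    {d : MvPolynomial σ K} (hd : ∀ i, q i ∣ d) (f : MvPolynomial ι K) :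
    ∃ (k : ℕ) (g : MvPolynomial σ K),
      rename Sum.inl d ^ k * rename Sum.inr f - rename Sum.inl g ∈ graphIdeal p q := by
  set π := Ideal.Quotient.mkₐ K (graphIdeal p q)
  set S := (π.comp (rename Sum.inl)).range
  have hy : ∀ i, π (rename Sum.inl d) * π (X (Sum.inr i)) ∈ S := by
    intro i
    obtain ⟨s, hs⟩ := hd i
    refine ⟨s * p i, ?_⟩
    change π (rename Sum.inl (s * p i)) = _
    rw [← map_mul, eq_comm]
    exact Ideal.Quotient.eq.2 (rename_inl_mul_X_inr_sub_mem_graphIdeal hs)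
  obtain ⟨k, g, hg⟩ := S.exists_pow_mul_aeval_mem ⟨d, rfl⟩ _ hy f
  change π (rename Sum.inl g) =
    π (rename Sum.inl d) ^ k * aeval (fun i => π (X (Sum.inr i))) f at hg
  rw [← comp_aeval_apply, show aeval (fun i => X (Sum.inr i)) f = rename Sum.inr f by
    rw [rename_eq_aeval]; rfl] at hg
  refine ⟨k, g, Ideal.Quotient.eq.1 ?_⟩
  simpa only [π, Ideal.Quotient.mkₐ_eq_mk, map_mul, map_pow] using hg.symm

theorem eval₂_eq_zero_iff_exists_pow_mul_mem_graphIdeal [NoZeroDivisors F]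
    {p q : ι → MvPolynomial σ K} {r : ι → F} {d : MvPolynomial σ K}
    (hinj : Function.Injective (algebraMap (MvPolynomial σ K) F))
    (hr : ∀ i, algebraMap _ F (q i) * r i = algebraMap _ F (p i))
    (hd : ∀ i, q i ∣ d) (hd0 : d ≠ 0) (f : MvPolynomial ι K) :
    eval₂ ((algebraMap (MvPolynomial σ K) F).comp C) r f = 0 ↔
      ∃ k : ℕ, rename Sum.inl d ^ k * rename Sum.inr f ∈ graphIdeal p q := by
  have hker := graphIdeal_le_ker_substHom hr
  have hsubst : ∀ k, substHom r (rename Sum.inl d ^ k * rename Sum.inr f) =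
      algebraMap _ F d ^ k * eval₂ ((algebraMap (MvPolynomial σ K) F).comp C) r f := by
    intro k
    rw [map_mul, map_pow, substHom_rename_inl, substHom_rename_inr]
  constructor
  · intro hf
    obtain ⟨k, g, hmem⟩ := exists_pow_mul_rename_inr_sub_rename_inl_mem (p := p) hd f
    have hg : g = 0 := by
      have hzero := hker hmem
      rw [RingHom.mem_ker, map_sub, hsubst, hf, mul_zero, zero_sub, neg_eq_zero,
        substHom_rename_inl] at hzero
      exact hinj (hzero.trans (map_zero _).symm)
    exact ⟨k, by simpa [hg] using hmem⟩
  · rintro ⟨k, hk⟩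
    have hzero := hker hk
    rw [RingHom.mem_ker, hsubst] at hzero
    exact (mul_eq_zero.1 hzero).resolve_left (pow_ne_zero _ ((map_ne_zero_iff _ hinj).2 hd0))

end MvPolynomial

/-- the ideal of algebraic relations among rational functions
`rᵢ = pᵢ/qᵢ` equals the saturation of `⟨qᵢ·yᵢ - pᵢ⟩` with respect to
`d = lcm(q₁,…,q_m)`, intersected with `K[y]`.  Membership formulation: a
polynomial `f ∈ K[y₁,…,y_m]` satisfies `f(r₁,…,r_m) = 0` iff some power of `d`
times `f` (viewed in `K[x,y]`) lies in the ideal generated by the `qᵢ·yᵢ - pᵢ`. -/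
theorem stmt_4 (K : Type*) [Field K] (n m : ℕ)
    (p q : Fin m → MvPolynomial (Fin n) K) (hq : ∀ i, q i ≠ 0)
    (d : MvPolynomial (Fin n) K)
    (hd₁ : ∀ i, q i ∣ d)
    (hd₂ : ∀ e : MvPolynomial (Fin n) K, (∀ i, q i ∣ e) → d ∣ e)
    (F : Type*) [Field F] [Algebra (MvPolynomial (Fin n) K) F]
    [IsFractionRing (MvPolynomial (Fin n) K) F]
    (r : Fin m → F)
    (hr : ∀ i, r i = algebraMap (MvPolynomial (Fin n) K) F (p i) /
                    algebraMap (MvPolynomial (Fin n) K) F (q i))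
    (J : Ideal (MvPolynomial (Fin n ⊕ Fin m) K))
    (hJ : J = Ideal.span (Set.range fun i : Fin m =>
      rename Sum.inl (q i) * X (Sum.inr i) - rename Sum.inl (p i))) :
    ∀ f : MvPolynomial (Fin m) K,
      eval₂ ((algebraMap (MvPolynomial (Fin n) K) F).comp (C : K →+* _)) r f = 0 ↔
        ∃ k : ℕ, (rename Sum.inl d) ^ k * rename Sum.inr f ∈ J := by
  subst hJ
  have hinj := IsFractionRing.injective (MvPolynomial (Fin n) K) F
  have hd0 : d ≠ 0 :=
    ne_zero_of_dvd_ne_zero (Finset.prod_ne_zero_iff.2 fun i _ => hq i)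
      (hd₂ _ fun i => Finset.dvd_prod_of_mem q (Finset.mem_univ i))
  refine eval₂_eq_zero_iff_exists_pow_mul_mem_graphIdeal hinj (fun i => ?_) hd₁ hd0
  rw [hr i, mul_div_cancel₀ _ ((map_ne_zero_iff _ hinj).2 (hq i))]
end

section
/- If a prime ideal P in a commutative ring R has height n, then n is the maximal length of chains of prime ideals P₀ ⊂ P₁ ⊂ … ⊂ Pₙ = P, and the height of any prime ideal of K[x₁,…,x_m] is at most m. -/
theorem Order.isGreatest_length_strictMono_fin_of_height_eq {α : Type*} [Preorder α] {a : α}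
    {n : ℕ} (h : Order.height a = n) :
    IsGreatest {k : ℕ | ∃ c : Fin (k + 1) → α, StrictMono c ∧ c (Fin.last k) = a} n := by
  constructor
  · obtain ⟨p, hlast, hlen⟩ := Order.exists_series_of_height_eq_coe a h
    subst hlen
    exact ⟨p, p.strictMono, hlast⟩
  · rintro k ⟨c, hc, hlast⟩
    have hk : (k : ℕ∞) ≤ Order.height a :=
      hlast ▸ Order.length_le_height_last (p := ⟨k, c, fun i => hc i.castSucc_lt_succ⟩)
    exact_mod_cast h ▸ hk

theorem MvPolynomial.height_le_natCard_of_field {σ K : Type*} [Finite σ] [Field K]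
    (q : PrimeSpectrum (MvPolynomial σ K)) : Order.height q ≤ Nat.card σ := by
  have h := Order.height_le_krullDim q
  rw [← ringKrullDim, MvPolynomial.ringKrullDim_of_isNoetherianRing,
    ringKrullDim_eq_zero_of_field, zero_add] at h
  exact_mod_cast h

/-- if a prime ideal `P` of a commutative ring `R` has height `n`,
then `n` is the maximal length of chains of prime ideals
`P₀ ⊂ P₁ ⊂ … ⊂ Pₙ = P`; moreover the height of any prime ideal of
`K[x₁,…,x_m]` is at most `m`. -/
theorem stmt_6 (R : Type*) [CommRing R] (P : Ideal R) (hP : P.IsPrime) (n : ℕ)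
    (hn : Order.height (⟨P, hP⟩ : PrimeSpectrum R) = n) :
    IsGreatest {k : ℕ | ∃ c : Fin (k + 1) → PrimeSpectrum R,
        StrictMono c ∧ c (Fin.last k) = ⟨P, hP⟩} n ∧
    ∀ (K : Type) [Field K] (m : ℕ) (Q : Ideal (MvPolynomial (Fin m) K))
      (hQ : Q.IsPrime),
      Order.height (⟨Q, hQ⟩ : PrimeSpectrum (MvPolynomial (Fin m) K)) ≤ m := by
  refine ⟨Order.isGreatest_length_strictMono_fin_of_height_eq hn, fun K _ m Q hQ => ?_⟩
  simpa using MvPolynomial.height_le_natCard_of_field (⟨Q, hQ⟩ : PrimeSpectrum _)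
end

section
/- For the algebraic dependencies of the exponential sequences 2^n, 4^n, 2^{−n}: the ideal I = ⟨y₁² − y₂, y₁y₃ − 1, y₂y₃ − y₁⟩ ◁ ℚ[y₁,y₂,y₃] satisfies: p ∈ I implies p(2^n, 4^n, 2^{−n}) = 0 for all n ∈ ℕ, and conversely every polynomial p ∈ ℚ[y₁,y₂,y₃] vanishing at (2^n, 4^n, 2^{−n}) for all n ∈ ℕ lies in I. -/
/-!
Evaluation at `(2ⁿ, 4ⁿ, 2⁻ⁿ)` factors through the map `y₁ ↦ T`, `y₂ ↦ T²`, `y₃ ↦ T⁻¹` into the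
Laurent polynomials, followed by `T ↦ 2ⁿ`. The kernel of that map is `I`, because modulo `I` the
class of `y₁` is a unit with square `y₂` and inverse `y₃`, so the quotient map by `I` factors
through the Laurent polynomials as well. Finally, a Laurent polynomial vanishing at the infinitely
many points `2ⁿ` is zero, since some `T^N` times it is a polynomial with infinitely many roots.
-/

open MvPolynomial LaurentPolynomial

theorem LaurentPolynomial.eq_zero_of_infinite_eval₂_eq_zero {K : Type*} [CommRing K] [IsDomain K]
    {f : K[T;T⁻¹]} {s : Set Kˣ} (hs : s.Infinite) (hf : ∀ u ∈ s, eval₂ (RingHom.id K) u f = 0) :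
    f = 0 := by
  obtain ⟨N, g, hg⟩ := exists_T_pow f
  have hg0 : g = 0 := by
    refine Polynomial.eq_zero_of_infinite_isRoot g ((hs.image Units.val_injective.injOn).mono ?_)
    rintro _ ⟨u, hu, rfl⟩
    have := congrArg (eval₂ (RingHom.id K) u) hg
    rwa [eval₂_toLaurent, map_mul, hf u hu, zero_mul] at this
  rwa [hg0, map_zero, eq_comm, (isUnit_T _).mul_left_eq_zero] at hg

section LaurentParam

variable (R : Type*) [CommRing R]

noncomputable def laurentParam : MvPolynomial (Fin 3) R →ₐ[R] R[T;T⁻¹] :=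
  aeval ![T 1, T 2, T (-1)]

variable {R}

theorem eval₂_comp_laurentParam {S : Type*} [CommRing S] (f : R →+* S) (u : Sˣ) :
    (eval₂ f u).comp (laurentParam R : MvPolynomial (Fin 3) R →+* R[T;T⁻¹]) =
      eval₂Hom f ![(u : S), (u : S) ^ 2, ↑u⁻¹] := by
  refine MvPolynomial.ringHom_ext (fun r => ?_) (fun i => ?_)
  · simp [laurentParam]
  · fin_cases i <;> simp [laurentParam]

theorem ker_laurentParam :
    RingHom.ker (laurentParam R) =
      Ideal.span {X 0 ^ 2 - X 1, X 0 * X 2 - 1, X 1 * X 2 - X 0} := by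
  set J : Ideal (MvPolynomial (Fin 3) R) :=
    Ideal.span {X 0 ^ 2 - X 1, X 0 * X 2 - 1, X 1 * X 2 - X 0}
  refine le_antisymm (fun p hp => ?_) (Ideal.span_le.2 ?_)
  · have hsq : Ideal.Quotient.mk J (X 0 ^ 2) = Ideal.Quotient.mk J (X 1) :=
      Ideal.Quotient.eq.2 (Ideal.subset_span (by simp))
    have hinv : Ideal.Quotient.mk J (X 0 * X 2) = Ideal.Quotient.mk J 1 :=
      Ideal.Quotient.eq.2 (Ideal.subset_span (by simp))
    rw [map_mul, map_one] at hinv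
    let u : (MvPolynomial (Fin 3) R ⧸ J)ˣ := ⟨_, _, hinv, (mul_comm _ _).trans hinv⟩
    have hmk : eval₂Hom (algebraMap R _) ![(u : MvPolynomial (Fin 3) R ⧸ J), (u : _) ^ 2, ↑u⁻¹] =
        Ideal.Quotient.mk J := by
      refine MvPolynomial.ringHom_ext (fun r => by simp; rfl) (fun i => ?_)
      fin_cases i <;> simp [u, ← hsq]
    rw [← Ideal.Quotient.eq_zero_iff_mem, ← hmk, ← eval₂_comp_laurentParam]
    simp [RingHom.mem_ker.1 hp]
  · rintro q (rfl | rfl | rfl) <;>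
      simp only [SetLike.mem_coe, RingHom.mem_ker, laurentParam, map_sub, map_mul, map_pow,
        map_one, aeval_X, sub_eq_zero]
    · exact (T_pow 1 2).trans (by norm_num)
    · exact (T_add 1 (-1)).symm.trans (by norm_num)
    · exact (T_add 2 (-1)).symm.trans (by norm_num)

end LaurentParam

theorem eval_powers_two_eq_eval₂_laurentParam (n : ℕ) (p : MvPolynomial (Fin 3) ℚ) :
    eval (fun i => (![(2 : ℚ) ^ n, 4 ^ n, (1/2 : ℚ) ^ n] i)) p =
      eval₂ (RingHom.id ℚ) (Units.mk0 (2 : ℚ) two_ne_zero ^ n) (laurentParam ℚ p) := by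
  set u : ℚˣ := Units.mk0 2 two_ne_zero ^ n with hu
  have hpoint :
      (fun i => (![(2 : ℚ) ^ n, 4 ^ n, (1/2 : ℚ) ^ n] i)) = ![(u : ℚ), (u : ℚ) ^ 2, ↑u⁻¹] := by
    funext i
    fin_cases i
    · simp [hu]
    · simp only [hu, Units.val_pow_eq_pow_val, Units.val_mk0]
      rw [← pow_mul, mul_comm, pow_mul]
      norm_num
    · simp [hu]
  rw [hpoint]
  exact (RingHom.congr_fun (eval₂_comp_laurentParam (RingHom.id ℚ) _) p).symm

theorem infinite_range_pow_units_two :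
    (Set.range fun n : ℕ => Units.mk0 (2 : ℚ) two_ne_zero ^ n).Infinite := by
  refine Set.infinite_range_of_injective fun m n hmn => ?_
  have h : (2 : ℚ) ^ m = 2 ^ n := by simpa using congrArg Units.val hmn
  exact pow_right_injective₀ two_pos (by norm_num) h

/-- the ideal `⟨y₁² - y₂, y₁y₃ - 1, y₂y₃ - y₁⟩ ◁ ℚ[y₁,y₂,y₃]`
is exactly the ideal of algebraic dependencies of the sequences
`2ⁿ, 4ⁿ, 2⁻ⁿ`: a polynomial lies in it iff it vanishes at `(2ⁿ, 4ⁿ, 2⁻ⁿ)`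
for all `n ∈ ℕ`. -/
theorem stmt_18 (I : Ideal (MvPolynomial (Fin 3) ℚ))
    (hI : I = Ideal.span {X 0 ^ 2 - X 1, X 0 * X 2 - 1, X 1 * X 2 - X 0}) :
    ∀ p : MvPolynomial (Fin 3) ℚ,
      p ∈ I ↔ ∀ n : ℕ,
        eval (fun i => (![(2 : ℚ) ^ n, 4 ^ n, (1/2 : ℚ) ^ n] i)) p = 0 := by
  intro p
  simp only [hI, ← ker_laurentParam, RingHom.mem_ker, eval_powers_two_eq_eval₂_laurentParam]
  refine ⟨fun h n => by rw [h, map_zero], fun h => ?_⟩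
  refine eq_zero_of_infinite_eval₂_eq_zero infinite_range_pow_units_two ?_
  rintro _ ⟨n, rfl⟩
  exact h n
end

section
/- The ideal ⟨y₁² − y₂²⟩ ◁ ℚ[y₁,y₂], which is the ideal of all algebraic dependencies among the sequences 2^n and (−2)^n (i.e., equals { p ∈ ℚ[y₁,y₂] : ∀ n ∈ ℕ, p(2^n, (−2)^n) = 0 }), is radical but not prime. -/
/-!
Substituting `x ↦ c y` changes a polynomial `p ∈ R[x, y]` only by a multiple of `x - c y`, and
turns it into a one-variable polynomial in `y`. So if `p` vanishes at infinitely many points of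
the line `x = c y`, that polynomial is zero and `x - c y ∣ p`. The points `(2ⁿ, (-2)ⁿ)` run
infinitely often along both lines `x = y` and `x = -y`, whence the ideal is exactly
`⟨(x - y)(x + y)⟩`. Being cut out by points it is radical, while `x - y` and `x + y` lie
outside it.
-/

open MvPolynomial
open scoped Polynomial

namespace MvPolynomial

variable {R : Type*} [CommRing R]

theorem sub_aeval_mem {σ : Type*} (J : Ideal (MvPolynomial σ R)) (f : σ → MvPolynomial σ R)
    (hf : ∀ i, X i - f i ∈ J) (p : MvPolynomial σ R) : p - aeval f p ∈ J := by
  have hcomp : (Ideal.Quotient.mkₐ R J).comp (aeval f) = Ideal.Quotient.mkₐ R J :=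
    algHom_ext fun i => by simpa [Ideal.Quotient.eq] using sub_mem_comm_iff.mp (hf i)
  rw [← Ideal.Quotient.eq, ← Ideal.Quotient.mkₐ_eq_mk R, ← AlgHom.comp_apply, hcomp]

theorem X_zero_sub_smul_X_one_dvd_of_aeval_eq_zero (c : R) (p : MvPolynomial (Fin 2) R)
    (hp : aeval (![c • Polynomial.X, Polynomial.X] : Fin 2 → R[X]) p = 0) :
    X 0 - c • X 1 ∣ p := by
  have hfactor : aeval ![c • X 1, X 1] =
      (Polynomial.aeval (X 1 : MvPolynomial (Fin 2) R)).comp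
        (aeval (![c • Polynomial.X, Polynomial.X] : Fin 2 → R[X])) := by
    rw [comp_aeval]
    congr 1
    ext i : 1
    fin_cases i <;> simp
  have hmem := sub_aeval_mem (Ideal.span {X 0 - c • X 1}) ![c • X 1, X 1]
    (fun i => by fin_cases i <;> simp) p
  rwa [hfactor, AlgHom.comp_apply, hp, map_zero, sub_zero, Ideal.mem_span_singleton] at hmem

theorem X_zero_sub_smul_X_one_dvd_of_infinite [IsDomain R] (c : R) (p : MvPolynomial (Fin 2) R)
    (hp : {t : R | eval ![c * t, t] p = 0}.Infinite) : X 0 - c • X 1 ∣ p := by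
  refine X_zero_sub_smul_X_one_dvd_of_aeval_eq_zero c p
    (Polynomial.eq_zero_of_infinite_isRoot _ ?_)
  convert hp using 3 with t
  have hpoint :
      (fun i => Polynomial.aeval t ((![c • Polynomial.X, Polynomial.X] : Fin 2 → R[X]) i)) =
        ![c * t, t] := by
    ext i
    fin_cases i <;> simp
  rw [Polynomial.IsRoot.def, ← Polynomial.coe_aeval_eq_eval, ← AlgHom.comp_apply, comp_aeval,
    hpoint]
  rfl

end MvPolynomial

theorem mem_span_X_zero_sq_sub_X_one_sq_iff (p : MvPolynomial (Fin 2) ℚ) :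
    p ∈ Ideal.span {X 0 ^ 2 - X 1 ^ 2} ↔
      ∀ n : ℕ, eval ![(2 : ℚ) ^ n, (-2) ^ n] p = 0 := by
  rw [Ideal.mem_span_singleton]
  constructor
  · rintro ⟨q, rfl⟩ n
    simp [pow_right_comm _ n 2]
  · intro h
    have hpow : Function.Injective fun k : ℕ => (4 : ℚ) ^ k :=
      pow_right_injective₀ (by norm_num) (by norm_num)
    obtain ⟨q, rfl⟩ : X 0 - X 1 ∣ p := by
      have hdiag : {t : ℚ | eval ![1 * t, t] p = 0}.Infinite := by
        refine (Set.infinite_range_of_injective hpow).mono ?_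
        rintro _ ⟨k, rfl⟩
        have := h (2 * k)
        norm_num [pow_mul] at this
        simpa using this
      simpa using X_zero_sub_smul_X_one_dvd_of_infinite 1 p hdiag
    -- `x - y` does not vanish at the odd points, so the cofactor `q` does.
    obtain ⟨r, rfl⟩ : X 0 - (-1 : ℚ) • X 1 ∣ q := by
      have hanti : {t : ℚ | eval ![-1 * t, t] q = 0}.Infinite := by
        refine (Set.infinite_range_of_injective
          (neg_injective.comp ((mul_right_injective₀ two_ne_zero).comp hpow))).mono ?_
        rintro _ ⟨k, rfl⟩
        have := h (2 * k + 1)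
        norm_num [pow_succ, pow_mul] at this
        simpa [mul_comm] using this
      exact X_zero_sub_smul_X_one_dvd_of_infinite (-1) q hanti
    exact ⟨r, by rw [neg_one_smul, sub_neg_eq_add]; ring⟩

/-- the ideal `⟨y₁² - y₂²⟩ ◁ ℚ[y₁,y₂]` is the ideal of all
algebraic dependencies among the sequences `2ⁿ` and `(-2)ⁿ`, and it is
radical but not prime. -/
theorem stmt_19 (I : Ideal (MvPolynomial (Fin 2) ℚ))
    (hI : I = Ideal.span {X 0 ^ 2 - X 1 ^ 2}) :
    (∀ p : MvPolynomial (Fin 2) ℚ,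
      p ∈ I ↔ ∀ n : ℕ, eval (fun i => (![(2 : ℚ) ^ n, (-2 : ℚ) ^ n] i)) p = 0) ∧
    I.IsRadical ∧ ¬ I.IsPrime := by
  subst hI
  have hmem := mem_span_X_zero_sq_sub_X_one_sq_iff
  refine ⟨hmem, ?_, ?_⟩
  · rintro p ⟨m, hm⟩
    rw [hmem] at hm ⊢
    exact fun n => IsNilpotent.eq_zero ⟨m, by simpa using hm n⟩
  · intro hprime
    have hfactor : (X 0 - X 1) * (X 0 + X 1) ∈
        Ideal.span {(X 0 ^ 2 - X 1 ^ 2 : MvPolynomial (Fin 2) ℚ)} :=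
      Ideal.mem_span_singleton.2 ⟨1, by ring⟩
    rcases hprime.mem_or_mem hfactor with h | h
    · simpa using (hmem _).1 h 1
    · simpa using (hmem _).1 h 0
end
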